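/- arXiv:1203.0620 — 2 statements merged into one kernel-verified Lean document; each statement's English description precedes it below -/
import Mathlib

section
/- Let K be a field, L a quadratic Galois extension of K with nontrivial automorphism σ₀, and ψ : Gal(K̄/K) → {±1} the character with kernel Gal(K̄/L). Fix an integer m ≥ 1 and x ∈ L× with N_{L/K}(x) = 1. Choose u ∈ K̄× with u^m = x. Then the map c : Gal(K̄/K) → μ_m defined by c(σ) = (σ(u))^{ψ(σ)}/u takes values in the m-th roots of unity μ_m and is a 1-cocycle for the action of Gal(K̄/K) on μ_m twisted by ψ, i.e. c(στ) = (σ ∗ c(τ)) · c(σ) for all σ, τ, where the twisted action is σ ∗ ζ = σ(ζ)^{ψ(σ)}. -/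
/-- Let `L/K` be a quadratic extension inside an algebraic closure `K̄`,
`ψ` the quadratic character of `Gal(K̄/K)` with kernel `Gal(K̄/L)`, `x ∈ L×` with
`N_{L/K}(x) = 1` (equivalently `σ(x)·x = 1` for every `σ` nontrivial on `L`), and
`u ∈ K̄×` with `u^m = x`.  Then `c(σ) = σ(u)^{ψ(σ)}/u` takes values in `μ_m` and
satisfies the cocycle relation `c(στ) = (σ ∗ c(τ)) · c(σ)` for the `ψ`-twisted
Galois action `σ ∗ ζ = σ(ζ)^{ψ(σ)}`. -/
theorem stmt2 (K : Type*) [Field K] (m : ℕ) (hm : 1 ≤ m)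
    (L : IntermediateField K (AlgebraicClosure K))
    (hquad : Module.finrank K L = 2)
    (ψ : (AlgebraicClosure K ≃ₐ[K] AlgebraicClosure K) →* ℤˣ)
    (hψ : ∀ σ : AlgebraicClosure K ≃ₐ[K] AlgebraicClosure K,
      ψ σ = 1 ↔ ∀ y ∈ L, σ y = y)
    (x u : AlgebraicClosure K) (hx : x ∈ L) (hu : u ≠ 0) (hum : u ^ m = x)
    (hnorm : ∀ σ : AlgebraicClosure K ≃ₐ[K] AlgebraicClosure K,
      ψ σ = -1 → σ x * x = 1) :
    (∀ σ : AlgebraicClosure K ≃ₐ[K] AlgebraicClosure K,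
      (σ u ^ (ψ σ : ℤ) / u) ^ m = 1) ∧
    ∀ σ τ : AlgebraicClosure K ≃ₐ[K] AlgebraicClosure K,
      (σ * τ) u ^ (ψ (σ * τ) : ℤ) / u
        = σ (τ u ^ (ψ τ : ℤ) / u) ^ (ψ σ : ℤ) * (σ u ^ (ψ σ : ℤ) / u) := by
  have hx0 : x ≠ 0 := by rw [← hum]; exact pow_ne_zero _ hu
  constructor
  · intro σ
    have hσu : σ u ≠ 0 := by simp [hu]
    have key : (σ u ^ (ψ σ : ℤ) / u) ^ m = σ x ^ (ψ σ : ℤ) / x := by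
      rw [div_pow, ← zpow_natCast (σ u ^ (ψ σ : ℤ)), ← zpow_mul, mul_comm,
        zpow_mul, zpow_natCast, ← map_pow, hum]
    rw [key]
    rcases Int.units_eq_one_or (ψ σ) with h | h
    · have hfix := (hψ σ).mp h
      rw [hfix x hx, h]
      simp [div_self hx0]
    · have hn := hnorm σ h
      have hσx : σ x ≠ 0 := by simp [hx0]
      have hinv : σ x = x⁻¹ := eq_inv_of_mul_eq_one_left hn
      rw [h, hinv]
      push_cast
      simp [div_self hx0]
  · intro σ τ
    have hσu : σ u ≠ 0 := by simp [hu]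
    have hστu : σ (τ u) ≠ 0 := by simp [hu]
    have hmul : ((ψ (σ * τ) : ℤˣ) : ℤ) = ((ψ σ : ℤˣ) : ℤ) * ((ψ τ : ℤˣ) : ℤ) := by
      rw [map_mul]; push_cast; ring
    have hcomp : (σ * τ) u = σ (τ u) := rfl
    rw [hcomp, hmul]
    simp only [map_div₀, map_zpow₀, div_zpow, ← zpow_mul]
    rw [mul_comm ((ψ τ : ℤˣ) : ℤ)]
    field_simp
end

section
/- Let L/K be a quadratic extension of fields inside K̄ with nontrivial Galois character ψ, q ∈ K×, and τ : K̄×/qℤ → E(K̄) a bijective homomorphism satisfying τ(σ(u)) = ψ(σ)·σ(τ(u)) for all σ ∈ Gal(K̄/K). Then for u ∈ L×/qℤ: τ(u) ∈ E(K) (i.e. is fixed by all of Gal(K̄/K)) if and only if 𝒩(u) = 1, where 𝒩 : L×/qℤ → K×/qℤ is induced by the norm. Hence τ restricts to an isomorphism ker(𝒩) ≅ E(K). -/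
/-!
If `σ` moves `L`, then `σ` restricts to the nontrivial automorphism of `L/K` and `ψ σ = -1`, so
`τ (σ u) = (σ • τ u)⁻¹`. Hence `σ` fixes `τ u` iff `σ u = u⁻¹` modulo `q^ℤ`, i.e. iff
`N_{L/K} u = σ u * u` lies in `q^ℤ`. If `σ` fixes `L`, then `ψ σ = 1` and `σ` fixes `τ u` outright.
-/

open Module

theorem QuotientGroup.mk_eq_one_zpowers_iff {M : Type*} [DivisionCommMonoid M] {a v : Mˣ} :
    (v : Mˣ ⧸ Subgroup.zpowers a) = 1 ↔ ∃ m : ℤ, (v : M) = (a : M) ^ m := by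
  simp only [QuotientGroup.eq_one_iff, Subgroup.mem_zpowers_iff, Units.ext_iff,
    Units.val_zpow_eq_zpow_val, eq_comm (b := (v : M))]

theorem MulEquiv.eq_apply_iff_mul_eq_one {Q E : Type*} [Group Q] [Group E] (τ : Q ≃* E)
    {x y : Q} {e : E} (h : τ y = e⁻¹) : e = τ x ↔ y * x = 1 := by
  rw [mul_eq_one_iff_eq_inv, ← τ.injective.eq_iff, h, map_inv, inv_inj]

namespace IntermediateField

variable {K Ω : Type*} [Field K] [Field Ω] [Algebra K Ω] (L : IntermediateField K Ω)
  [FiniteDimensional K L] [Algebra.IsSeparable K L]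

theorem exists_algEquiv_ne_of_one_lt_finrank [IsAlgClosed Ω] [Normal K Ω]
    (hL : 1 < finrank K L) : ∃ σ : Ω ≃ₐ[K] Ω, ∃ y ∈ L, σ y ≠ y := by
  obtain ⟨φ, hφ⟩ : ∃ φ : L →ₐ[K] Ω, φ ≠ L.val :=
    Fintype.exists_ne_of_one_lt_card (by rwa [AlgHom.card]) L.val
  obtain ⟨y, hy⟩ : ∃ y : L, φ y ≠ y := by
    by_contra! h
    exact hφ (AlgHom.ext h)
  exact ⟨AlgEquiv.ofBijective (φ.liftNormal Ω) (AlgHom.normal_bijective K Ω Ω _), y, y.2,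
    (φ.liftNormal_commutes Ω y).trans_ne hy⟩

theorem algebraMap_norm_eq_mul_of_finrank_eq_two [IsAlgClosed Ω] (hL : finrank K L = 2)
    {σ : Ω →ₐ[K] Ω} (hσ : ∃ y ∈ L, σ y ≠ y) (x : L) :
    algebraMap K Ω (Algebra.norm K x) = σ x * x := by
  classical
  obtain ⟨y, hy, hσy⟩ := hσ
  have hne : σ.comp L.val ≠ L.val := fun h ↦ hσy (congrArg (· ⟨y, hy⟩) h)
  have huniv : ({σ.comp L.val, L.val} : Finset (L →ₐ[K] Ω)) = Finset.univ :=
    Finset.eq_univ_of_card _ (by rw [Finset.card_pair hne, AlgHom.card, hL])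
  rw [Algebra.norm_eq_prod_embeddings, ← huniv, Finset.prod_pair hne]
  rfl

end IntermediateField

/-- key fact in the proof of Lemma 5.6: Let `L/K` be a quadratic
extension inside `K̄` with quadratic character `ψ` (kernel `Gal(K̄/L)`), `q ∈ K×`, and
`τ : K̄×/q^ℤ ≅ E(K̄)` a Tate-type parametrization with `τ(σu) = (σ·τ(u))^{ψ(σ)}`.
Then for `u ∈ L×`: `τ(u)` is fixed by all of `Gal(K̄/K)` (i.e. `τ(u) ∈ E(K)`) if and
only if `𝒩(u) = 1`, i.e. `N_{L/K}(u)` lies in `q^ℤ`.  Hence `τ` restricts to an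
isomorphism `ker 𝒩 ≅ E(K)`. -/
theorem stmt12 (K : Type*) [Field K] [CharZero K]
    (L : IntermediateField K (AlgebraicClosure K)) [FiniteDimensional K L]
    (hL : Module.finrank K L = 2)
    (ψ : (AlgebraicClosure K ≃ₐ[K] AlgebraicClosure K) →* ℤˣ)
    (hψ : ∀ σ : AlgebraicClosure K ≃ₐ[K] AlgebraicClosure K,
      ψ σ = 1 ↔ ∀ y ∈ L, σ y = y)
    (E : Type*) [CommGroup E]
    [MulDistribMulAction (AlgebraicClosure K ≃ₐ[K] AlgebraicClosure K) E]
    (q : Kˣ)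
    (τ : (AlgebraicClosure K)ˣ ⧸ Subgroup.zpowers
        (Units.map (algebraMap K (AlgebraicClosure K)).toMonoidHom q) ≃* E)
    (hτ : ∀ (σ : AlgebraicClosure K ≃ₐ[K] AlgebraicClosure K)
        (u : (AlgebraicClosure K)ˣ),
      τ (QuotientGroup.mk (Units.map (MonoidHomClass.toMonoidHom σ) u))
        = (σ • τ (QuotientGroup.mk u)) ^ (ψ σ : ℤ)) :
    ∀ (u : (AlgebraicClosure K)ˣ) (hu : (u : AlgebraicClosure K) ∈ L),
      (∀ σ : AlgebraicClosure K ≃ₐ[K] AlgebraicClosure K,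
        σ • τ (QuotientGroup.mk u) = τ (QuotientGroup.mk u))
      ↔ ∃ m : ℤ,
          algebraMap K (AlgebraicClosure K)
            (Algebra.norm K (⟨(u : AlgebraicClosure K), hu⟩ : L))
          = algebraMap K (AlgebraicClosure K) (q : K) ^ m := by
  intro u hu
  have fixed_iff_of_moves : ∀ σ : AlgebraicClosure K ≃ₐ[K] AlgebraicClosure K,
      (∃ y ∈ L, σ y ≠ y) → (σ • τ (QuotientGroup.mk u) = τ (QuotientGroup.mk u) ↔
        ∃ m : ℤ, algebraMap K (AlgebraicClosure K) (Algebra.norm K (⟨u, hu⟩ : L))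
          = algebraMap K (AlgebraicClosure K) (q : K) ^ m) := by
    intro σ hσ
    have hψσ : ψ σ = -1 := by
      obtain ⟨y, hy, hσy⟩ := hσ
      exact (Int.units_eq_one_or _).resolve_left fun h ↦ hσy ((hψ σ).1 h y hy)
    have hinv : τ (QuotientGroup.mk (Units.map (MonoidHomClass.toMonoidHom σ) u))
        = (σ • τ (QuotientGroup.mk u))⁻¹ := by
      rw [hτ, hψσ, Units.val_neg, Units.val_one, zpow_neg_one]
    rw [τ.eq_apply_iff_mul_eq_one hinv, ← QuotientGroup.mk_mul,
      QuotientGroup.mk_eq_one_zpowers_iff,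
      IntermediateField.algebraMap_norm_eq_mul_of_finrank_eq_two L hL (σ := σ.toAlgHom) hσ]
    rfl
  obtain ⟨σ₀, hσ₀⟩ :=
    IntermediateField.exists_algEquiv_ne_of_one_lt_finrank L (hL ▸ one_lt_two)
  refine ⟨fun hfix ↦ (fixed_iff_of_moves σ₀ hσ₀).1 (hfix σ₀), fun hN σ ↦ ?_⟩
  by_cases hσ : ∀ y ∈ L, σ y = y
  · have hσu : Units.map (MonoidHomClass.toMonoidHom σ) u = u := Units.ext (hσ u hu)
    simpa [hσu, (hψ σ).2 hσ] using (hτ σ u).symm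
  · exact (fixed_iff_of_moves σ (by simpa using hσ)).2 hN
end
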